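/- Let φ be an LTL formula in negation normal form, w an infinite word over 2^Ap, and X ⊆ μ(φ). If F_w = X = GF_w, then w ⊨ φ if and only if w ⊨ φ[X]_ν. -/
import Mathlib


/-- LTL formulas in negation normal form over atomic propositions `Ap`. -/
inductive LTL (Ap : Type) : Type
  | tt : LTL Ap
  | ff : LTL Ap
  | atom (a : Ap) : LTL Ap
  | natom (a : Ap) : LTL Ap
  | conj (φ ψ : LTL Ap) : LTL Ap
  | disj (φ ψ : LTL Ap) : LTL Ap
  | next (φ : LTL Ap) : LTL Ap
  | fut (φ : LTL Ap) : LTL Ap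
  | glob (φ : LTL Ap) : LTL Ap
  | untl (φ ψ : LTL Ap) : LTL Ap
  | wUntl (φ ψ : LTL Ap) : LTL Ap
  | strongRel (φ ψ : LTL Ap) : LTL Ap
  | rel (φ ψ : LTL Ap) : LTL Ap

variable {Ap : Type} [DecidableEq Ap]

/-- The suffix `w_i` of an infinite word. -/
def suffix (w : ℕ → Finset Ap) (i : ℕ) : ℕ → Finset Ap := fun k => w (i + k)

/-- Standard LTL satisfaction over infinite words over `2^Ap`. -/
def Sat : (ℕ → Finset Ap) → LTL Ap → Prop
  | _, .tt => True
  | _, .ff => False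
  | w, .atom a => a ∈ w 0
  | w, .natom a => a ∉ w 0
  | w, .conj φ ψ => Sat w φ ∧ Sat w ψ
  | w, .disj φ ψ => Sat w φ ∨ Sat w ψ
  | w, .next φ => Sat (suffix w 1) φ
  | w, .fut φ => ∃ k, Sat (suffix w k) φ
  | w, .glob φ => ∀ k, Sat (suffix w k) φ
  | w, .untl φ ψ => ∃ k, Sat (suffix w k) ψ ∧ ∀ j < k, Sat (suffix w j) φ
  | w, .wUntl φ ψ =>
      (∀ k, Sat (suffix w k) φ) ∨ (∃ k, Sat (suffix w k) ψ ∧ ∀ j < k, Sat (suffix w j) φ)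
  | w, .strongRel φ ψ => ∃ k, Sat (suffix w k) φ ∧ ∀ j ≤ k, Sat (suffix w j) ψ
  | w, .rel φ ψ =>
      (∀ k, Sat (suffix w k) ψ) ∨ (∃ k, Sat (suffix w k) φ ∧ ∀ j ≤ k, Sat (suffix w j) ψ)

/-- The "after" function on a single letter `ν ∈ 2^Ap`. -/
def afLetter : LTL Ap → Finset Ap → LTL Ap
  | .tt, _ => .tt
  | .ff, _ => .ff
  | .atom a, ν => if a ∈ ν then .tt else .ff
  | .natom a, ν => if a ∈ ν then .ff else .tt
  | .conj φ ψ, ν => .conj (afLetter φ ν) (afLetter ψ ν)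
  | .disj φ ψ, ν => .disj (afLetter φ ν) (afLetter ψ ν)
  | .next φ, _ => φ
  | .fut φ, ν => .disj (afLetter φ ν) (.fut φ)
  | .glob φ, ν => .conj (afLetter φ ν) (.glob φ)
  | .untl φ ψ, ν => .disj (afLetter ψ ν) (.conj (afLetter φ ν) (.untl φ ψ))
  | .wUntl φ ψ, ν => .disj (afLetter ψ ν) (.conj (afLetter φ ν) (.wUntl φ ψ))
  | .strongRel φ ψ, ν => .conj (afLetter ψ ν) (.disj (afLetter φ ν) (.strongRel φ ψ))
  | .rel φ ψ, ν => .conj (afLetter ψ ν) (.disj (afLetter φ ν) (.rel φ ψ))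

/-- The "after" function extended to finite words. -/
def af : LTL Ap → List (Finset Ap) → LTL Ap
  | φ, [] => φ
  | φ, ν :: u => af (afLetter φ ν) u

/-- The finite prefix `w_{0i} = w[0]⋯w[i-1]` of an infinite word. -/
def prefixWord (w : ℕ → Finset Ap) (i : ℕ) : List (Finset Ap) :=
  (List.range i).map w

/-- The finite infix `w_{ij} = w[i]⋯w[j-1]` of an infinite word. -/
def infixWord (w : ℕ → Finset Ap) (i j : ℕ) : List (Finset Ap) :=
  (List.range (j - i)).map (fun k => w (i + k))

/-- Evaluation of a formula as a propositional formula, where every maximal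
proper subformula (root not `∧`/`∨`) is treated as a propositional variable
whose truth value is given by the assignment `v`. -/
def propEval (v : LTL Ap → Prop) : LTL Ap → Prop
  | .tt => True
  | .ff => False
  | .conj φ ψ => propEval v φ ∧ propEval v ψ
  | .disj φ ψ => propEval v φ ∨ propEval v ψ
  | φ => v φ

/-- Propositional equivalence `φ ≡_P ψ`. -/
def propEquiv (φ ψ : LTL Ap) : Prop := ∀ v, propEval v φ ↔ propEval v ψ

/-- The set of subformulas of a formula (including itself). -/
def subf : LTL Ap → Set (LTL Ap)
  | .tt => {LTL.tt}
  | .ff => {LTL.ff}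
  | .atom a => {LTL.atom a}
  | .natom a => {LTL.natom a}
  | .conj φ ψ => insert (.conj φ ψ) (subf φ ∪ subf ψ)
  | .disj φ ψ => insert (.disj φ ψ) (subf φ ∪ subf ψ)
  | .next φ => insert (.next φ) (subf φ)
  | .fut φ => insert (.fut φ) (subf φ)
  | .glob φ => insert (.glob φ) (subf φ)
  | .untl φ ψ => insert (.untl φ ψ) (subf φ ∪ subf ψ)
  | .wUntl φ ψ => insert (.wUntl φ ψ) (subf φ ∪ subf ψ)
  | .strongRel φ ψ => insert (.strongRel φ ψ) (subf φ ∪ subf ψ)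
  | .rel φ ψ => insert (.rel φ ψ) (subf φ ∪ subf ψ)

/-- A formula is proper if its root is not a conjunction or a disjunction. -/
def isProper : LTL Ap → Prop
  | .conj _ _ => False
  | .disj _ _ => False
  | _ => True

/-- The set of proper subformulas of `φ`. -/
def properSubf (φ : LTL Ap) : Set (LTL Ap) := {ψ | ψ ∈ subf φ ∧ isProper ψ}

/-- Formulas whose root is a least-fixed-point operator (`F`, `U`, `M`). -/
def isMu : LTL Ap → Prop
  | .fut _ => True
  | .untl _ _ => True
  | .strongRel _ _ => True
  | _ => False

/-- Formulas whose root is a greatest-fixed-point operator (`G`, `W`, `R`). -/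
def isNu : LTL Ap → Prop
  | .glob _ => True
  | .wUntl _ _ => True
  | .rel _ _ => True
  | _ => False

/-- `μ(φ)`: subformulas of `φ` of the form `Fψ`, `ψ₁Uψ₂`, `ψ₁Mψ₂`. -/
def muSet (φ : LTL Ap) : Set (LTL Ap) := {ψ | ψ ∈ subf φ ∧ isMu ψ}

/-- `ν(φ)`: subformulas of `φ` of the form `Gψ`, `ψ₁Wψ₂`, `ψ₁Rψ₂`. -/
def nuSet (φ : LTL Ap) : Set (LTL Ap) := {ψ | ψ ∈ subf φ ∧ isNu ψ}

/-- `GF_w = {ψ ∈ μ(φ) | w ⊨ GFψ}`. -/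
def GFSet (φ : LTL Ap) (w : ℕ → Finset Ap) : Set (LTL Ap) :=
  {ψ | ψ ∈ muSet φ ∧ Sat w (.glob (.fut ψ))}

/-- `F_w = {ψ ∈ μ(φ) | w ⊨ Fψ}`. -/
def FSet (φ : LTL Ap) (w : ℕ → Finset Ap) : Set (LTL Ap) :=
  {ψ | ψ ∈ muSet φ ∧ Sat w (.fut ψ)}

/-- `FG_w = {ψ ∈ ν(φ) | w ⊨ FGψ}`. -/
def FGSet (φ : LTL Ap) (w : ℕ → Finset Ap) : Set (LTL Ap) :=
  {ψ | ψ ∈ nuSet φ ∧ Sat w (.fut (.glob ψ))}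

/-- `G_w = {ψ ∈ ν(φ) | w ⊨ Gψ}`. -/
def GSet (φ : LTL Ap) (w : ℕ → Finset Ap) : Set (LTL Ap) :=
  {ψ | ψ ∈ nuSet φ ∧ Sat w (.glob ψ)}

open scoped Classical in
/-- `φ[X]_ν`. -/
noncomputable def evalNu (X : Set (LTL Ap)) : LTL Ap → LTL Ap
  | .tt => .tt
  | .ff => .ff
  | .atom a => .atom a
  | .natom a => .natom a
  | .conj φ ψ => .conj (evalNu X φ) (evalNu X ψ)
  | .disj φ ψ => .disj (evalNu X φ) (evalNu X ψ)
  | .next φ => .next (evalNu X φ)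
  | .glob φ => .glob (evalNu X φ)
  | .wUntl φ ψ => .wUntl (evalNu X φ) (evalNu X ψ)
  | .rel φ ψ => .rel (evalNu X φ) (evalNu X ψ)
  | .fut φ => if LTL.fut φ ∈ X then .tt else .ff
  | .untl φ ψ => if LTL.untl φ ψ ∈ X then .wUntl (evalNu X φ) (evalNu X ψ) else .ff
  | .strongRel φ ψ => if LTL.strongRel φ ψ ∈ X then .rel (evalNu X φ) (evalNu X ψ) else .ff

open scoped Classical in
/-- `φ[Y]_μ`. -/
noncomputable def evalMu (Y : Set (LTL Ap)) : LTL Ap → LTL Ap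
  | .tt => .tt
  | .ff => .ff
  | .atom a => .atom a
  | .natom a => .natom a
  | .conj φ ψ => .conj (evalMu Y φ) (evalMu Y ψ)
  | .disj φ ψ => .disj (evalMu Y φ) (evalMu Y ψ)
  | .next φ => .next (evalMu Y φ)
  | .fut φ => .fut (evalMu Y φ)
  | .untl φ ψ => .untl (evalMu Y φ) (evalMu Y ψ)
  | .strongRel φ ψ => .strongRel (evalMu Y φ) (evalMu Y ψ)
  | .glob φ => if LTL.glob φ ∈ Y then .tt else .ff
  | .wUntl φ ψ => if LTL.wUntl φ ψ ∈ Y then .tt else .untl (evalMu Y φ) (evalMu Y ψ)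
  | .rel φ ψ => if LTL.rel φ ψ ∈ Y then .tt else .strongRel (evalMu Y φ) (evalMu Y ψ)

/-- Concatenation `u·w` of a finite word and an infinite word. -/
def wordAppend (u : List (Finset Ap)) (w : ℕ → Finset Ap) : ℕ → Finset Ap :=
  fun i => if h : i < u.length then u.get ⟨i, h⟩ else w (i - u.length)

/-- The smallest set of formulas containing `tt`, `ff` and all elements of `S`
that is closed under conjunction and disjunction. -/
inductive PosBool (S : Set (LTL Ap)) : LTL Ap → Prop
  | tt : PosBool S .tt
  | ff : PosBool S .ff
  | base {ψ : LTL Ap} : ψ ∈ S → PosBool S ψ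
  | conj {φ ψ : LTL Ap} : PosBool S φ → PosBool S ψ → PosBool S (.conj φ ψ)
  | disj {φ ψ : LTL Ap} : PosBool S φ → PosBool S ψ → PosBool S (.disj φ ψ)

/-- `Reach(φ)`: the set of `≡_P`-equivalence classes of the formulas `af(φ,u)`
over all finite words `u`. -/
def Reach (φ : LTL Ap) : Set (Set (LTL Ap)) :=
  {C | ∃ u : List (Finset Ap), C = {ψ | propEquiv ψ (af φ u)}}

/-- The fragment `μLTL`: only `tt`, `ff`, literals, `∧`, `∨`, `X`, `F`, `U`, `M`. -/
def inMuLTL : LTL Ap → Prop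
  | .tt => True
  | .ff => True
  | .atom _ => True
  | .natom _ => True
  | .conj φ ψ => inMuLTL φ ∧ inMuLTL ψ
  | .disj φ ψ => inMuLTL φ ∧ inMuLTL ψ
  | .next φ => inMuLTL φ
  | .fut φ => inMuLTL φ
  | .untl φ ψ => inMuLTL φ ∧ inMuLTL ψ
  | .strongRel φ ψ => inMuLTL φ ∧ inMuLTL ψ
  | .glob _ => False
  | .wUntl _ _ => False
  | .rel _ _ => False

/-- The fragment `νLTL`: only `tt`, `ff`, literals, `∧`, `∨`, `X`, `G`, `W`, `R`. -/
def inNuLTL : LTL Ap → Prop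
  | .tt => True
  | .ff => True
  | .atom _ => True
  | .natom _ => True
  | .conj φ ψ => inNuLTL φ ∧ inNuLTL ψ
  | .disj φ ψ => inNuLTL φ ∧ inNuLTL ψ
  | .next φ => inNuLTL φ
  | .glob φ => inNuLTL φ
  | .wUntl φ ψ => inNuLTL φ ∧ inNuLTL ψ
  | .rel φ ψ => inNuLTL φ ∧ inNuLTL ψ
  | .fut _ => False
  | .untl _ _ => False
  | .strongRel _ _ => False

lemma suffix_suffix (w : ℕ → Finset Ap) (i j : ℕ) :
    suffix (suffix w i) j = suffix w (i + j) := by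
  funext k; simp [suffix, add_assoc]

lemma suffix_zero (w : ℕ → Finset Ap) : suffix w 0 = w := by
  funext k; simp [suffix]

/-- The key invariant: for every μ-subformula `χ` of `ψ`, membership in `X`
coincides with `w ⊨ Fχ`, and moreover `χ ∈ X` implies `w ⊨ GFχ`. -/
def GoodOn (X : Set (LTL Ap)) (ψ : LTL Ap) (w : ℕ → Finset Ap) : Prop :=
  ∀ χ, isMu χ → χ ∈ subf ψ →
    ((χ ∈ X ↔ ∃ k, Sat (suffix w k) χ) ∧
      (χ ∈ X → ∀ n, ∃ k, Sat (suffix w (n + k)) χ))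

lemma goodOn_mono {X : Set (LTL Ap)} {ψ₁ ψ₂ : LTL Ap} {w : ℕ → Finset Ap}
    (hsub : subf ψ₁ ⊆ subf ψ₂) (h : GoodOn X ψ₂ w) : GoodOn X ψ₁ w :=
  fun χ hm hs => h χ hm (hsub hs)

lemma goodOn_suffix {X : Set (LTL Ap)} {ψ : LTL Ap} {w : ℕ → Finset Ap}
    (h : GoodOn X ψ w) (i : ℕ) : GoodOn X ψ (suffix w i) := by
  intro χ hmu hsub
  obtain ⟨h1, h2⟩ := h χ hmu hsub
  constructor
  · constructor
    · intro hx
      obtain ⟨k, hk⟩ := h2 hx i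
      exact ⟨k, by rwa [suffix_suffix]⟩
    · rintro ⟨k, hk⟩
      rw [suffix_suffix] at hk
      exact h1.mpr ⟨i + k, hk⟩
  · intro hx n
    obtain ⟨k, hk⟩ := h2 hx (i + n)
    refine ⟨k, ?_⟩
    rw [suffix_suffix, ← add_assoc]
    exact hk

lemma key (X : Set (LTL Ap)) :
    ∀ (ψ : LTL Ap) (w : ℕ → Finset Ap), GoodOn X ψ w →
      (Sat w ψ ↔ Sat w (evalNu X ψ)) := by
  intro ψ
  induction ψ with
  | tt => intro w _; simp [evalNu]
  | ff => intro w _; simp [evalNu]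
  | atom a => intro w _; simp [evalNu]
  | natom a => intro w _; simp [evalNu]
  | conj φ₁ ψ₁ ih1 ih2 =>
    intro w h
    simp only [Sat, evalNu]
    rw [ih1 w (goodOn_mono (by intro χ hχ; simp [subf]; tauto) h),
        ih2 w (goodOn_mono (by intro χ hχ; simp [subf]; tauto) h)]
  | disj φ₁ ψ₁ ih1 ih2 =>
    intro w h
    simp only [Sat, evalNu]
    rw [ih1 w (goodOn_mono (by intro χ hχ; simp [subf]; tauto) h),
        ih2 w (goodOn_mono (by intro χ hχ; simp [subf]; tauto) h)]
  | next φ₁ ih =>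
    intro w h
    simp only [Sat, evalNu]
    exact ih (suffix w 1)
      (goodOn_suffix (goodOn_mono (by intro χ hχ; simp [subf]; tauto) h) 1)
  | fut φ₁ _ih =>
    intro w h
    have hself := h (.fut φ₁) trivial (by simp [subf])
    by_cases hx : LTL.fut φ₁ ∈ X
    · simp only [evalNu, if_pos hx, Sat, iff_true]
      obtain ⟨k, hk⟩ := hself.1.mp hx
      obtain ⟨j, hj⟩ := hk
      rw [suffix_suffix] at hj
      exact ⟨k + j, hj⟩
    · simp only [evalNu, if_neg hx, Sat, iff_false]
      intro hsat
      exact hx (hself.1.mpr ⟨0, by rw [suffix_zero]; exact hsat⟩)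
  | glob φ₁ ih =>
    intro w h
    simp only [Sat, evalNu]
    exact forall_congr' fun k =>
      ih _ (goodOn_suffix (goodOn_mono (by intro χ hχ; simp [subf]; tauto) h) k)
  | untl φ₁ ψ₁ ih1 ih2 =>
    intro w h
    have hφ : ∀ i, Sat (suffix w i) φ₁ ↔ Sat (suffix w i) (evalNu X φ₁) :=
      fun i => ih1 _
        (goodOn_suffix (goodOn_mono (by intro χ hχ; simp [subf]; tauto) h) i)
    have hψ : ∀ i, Sat (suffix w i) ψ₁ ↔ Sat (suffix w i) (evalNu X ψ₁) :=
      fun i => ih2 _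
        (goodOn_suffix (goodOn_mono (by intro χ hχ; simp [subf]; tauto) h) i)
    have hself := h (.untl φ₁ ψ₁) trivial (by simp [subf])
    by_cases hx : LTL.untl φ₁ ψ₁ ∈ X
    · simp only [evalNu, if_pos hx, Sat]
      constructor
      · rintro ⟨k, hk, hj⟩
        exact Or.inr ⟨k, (hψ k).mp hk, fun j hj' => (hφ j).mp (hj j hj')⟩
      · rintro (hall | ⟨k, hk, hj⟩)
        · obtain ⟨k, hk⟩ := hself.1.mp hx
          obtain ⟨m, hm, _⟩ := hk
          rw [suffix_suffix] at hm
          exact ⟨k + m, hm, fun j _ => (hφ j).mpr (hall j)⟩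
        · exact ⟨k, (hψ k).mpr hk, fun j hj' => (hφ j).mpr (hj j hj')⟩
    · simp only [evalNu, if_neg hx, Sat, iff_false]
      rintro ⟨k, hk, hj⟩
      exact hx (hself.1.mpr ⟨0, by rw [suffix_zero]; exact ⟨k, hk, hj⟩⟩)
  | wUntl φ₁ ψ₁ ih1 ih2 =>
    intro w h
    have hφ : ∀ i, Sat (suffix w i) φ₁ ↔ Sat (suffix w i) (evalNu X φ₁) :=
      fun i => ih1 _
        (goodOn_suffix (goodOn_mono (by intro χ hχ; simp [subf]; tauto) h) i)
    have hψ : ∀ i, Sat (suffix w i) ψ₁ ↔ Sat (suffix w i) (evalNu X ψ₁) :=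
      fun i => ih2 _
        (goodOn_suffix (goodOn_mono (by intro χ hχ; simp [subf]; tauto) h) i)
    simp only [Sat, evalNu]
    apply or_congr
    · exact forall_congr' fun k => hφ k
    · exact exists_congr fun k =>
        and_congr (hψ k) (forall_congr' fun j => imp_congr Iff.rfl (hφ j))
  | strongRel φ₁ ψ₁ ih1 ih2 =>
    intro w h
    have hφ : ∀ i, Sat (suffix w i) φ₁ ↔ Sat (suffix w i) (evalNu X φ₁) :=
      fun i => ih1 _
        (goodOn_suffix (goodOn_mono (by intro χ hχ; simp [subf]; tauto) h) i)
    have hψ : ∀ i, Sat (suffix w i) ψ₁ ↔ Sat (suffix w i) (evalNu X ψ₁) :=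
      fun i => ih2 _
        (goodOn_suffix (goodOn_mono (by intro χ hχ; simp [subf]; tauto) h) i)
    have hself := h (.strongRel φ₁ ψ₁) trivial (by simp [subf])
    by_cases hx : LTL.strongRel φ₁ ψ₁ ∈ X
    · simp only [evalNu, if_pos hx, Sat]
      constructor
      · rintro ⟨k, hk, hj⟩
        exact Or.inr ⟨k, (hφ k).mp hk, fun j hj' => (hψ j).mp (hj j hj')⟩
      · rintro (hall | ⟨k, hk, hj⟩)
        · obtain ⟨k, hk⟩ := hself.1.mp hx
          obtain ⟨m, hm, _⟩ := hk
          rw [suffix_suffix] at hm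
          exact ⟨k + m, hm, fun j _ => (hψ j).mpr (hall j)⟩
        · exact ⟨k, (hφ k).mpr hk, fun j hj' => (hψ j).mpr (hj j hj')⟩
    · simp only [evalNu, if_neg hx, Sat, iff_false]
      rintro ⟨k, hk, hj⟩
      exact hx (hself.1.mpr ⟨0, by rw [suffix_zero]; exact ⟨k, hk, hj⟩⟩)
  | rel φ₁ ψ₁ ih1 ih2 =>
    intro w h
    have hφ : ∀ i, Sat (suffix w i) φ₁ ↔ Sat (suffix w i) (evalNu X φ₁) :=
      fun i => ih1 _
        (goodOn_suffix (goodOn_mono (by intro χ hχ; simp [subf]; tauto) h) i)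
    have hψ : ∀ i, Sat (suffix w i) ψ₁ ↔ Sat (suffix w i) (evalNu X ψ₁) :=
      fun i => ih2 _
        (goodOn_suffix (goodOn_mono (by intro χ hχ; simp [subf]; tauto) h) i)
    simp only [Sat, evalNu]
    apply or_congr
    · exact forall_congr' fun k => hψ k
    · exact exists_congr fun k =>
        and_congr (hφ k) (forall_congr' fun j => imp_congr Iff.rfl (hψ j))

/-- if `F_w = X = GF_w` then `w ⊨ φ` iff `w ⊨ φ[X]_ν`. -/
theorem stmt12 {Ap : Type} [DecidableEq Ap] [Fintype Ap]
    (φ : LTL Ap) (w : ℕ → Finset Ap) (X : Set (LTL Ap))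
    (hX : X ⊆ muSet φ) (h1 : FSet φ w = X) (h2 : X = GFSet φ w) :
    Sat w φ ↔ Sat w (evalNu X φ) := by
  apply key X φ w
  intro χ hmu hsub
  constructor
  · constructor
    · intro hx
      rw [← h1] at hx
      exact hx.2
    · intro hsat
      rw [← h1]
      exact ⟨⟨hsub, hmu⟩, hsat⟩
  · intro hx n
    rw [h2] at hx
    have := hx.2 n
    obtain ⟨k, hk⟩ := this
    rw [suffix_suffix] at hk
    exact ⟨k, hk⟩
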